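/- arXiv:1408.5514 — 3 statements merged into one kernel-verified Lean document; each statement's English description precedes it below -/
import Mathlib

section
/- Let R be an integral domain with a height function h satisfying submultiplicativity and the subadditivity condition h(Σ_{i=1}^n a_i) ≤ h(n-1) + max_i h(a_i). Then for any polynomials p, q ∈ R[x], h(pq) ≤ h(min{deg(p), deg(q)}) + h(p) + h(q), where h of a polynomial is the maximum height of its coefficients. -/
open Polynomial

/-- A height function on an integral domain `R`. -/
structure HeightFn (R : Type*) [CommRing R] where
  h : R → ℝ
  h_zero : h 0 = 0
  h_nonneg : ∀ a, 0 ≤ h a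
  h_neg : ∀ a, h (-a) = h a
  h_mul : ∀ a b, h (a * b) ≤ h a + h b
  h_sum : ∀ (n : ℕ) (f : Fin n → R) (B : ℝ), 0 ≤ B → (∀ i, h (f i) ≤ B) →
    h (∑ i, f i) ≤ h ((n - 1 : ℕ) : R) + B

namespace HeightFn

variable {R : Type*} [CommRing R] (H : HeightFn R)

/-- Height of a natural number, viewed inside `R`. -/
def hN (n : ℕ) : ℝ := H.h (n : R)

/-- Height of a polynomial: the maximum height of its coefficients. -/
def hp (p : R[X]) : ℝ := p.support.fold max 0 fun i => H.h (p.coeff i)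

lemma hp_nonneg (p : R[X]) : 0 ≤ H.hp p := by
  rw [hp, Finset.le_fold_max]; exact Or.inl le_rfl

lemma h_coeff_le (p : R[X]) (i : ℕ) : H.h (p.coeff i) ≤ H.hp p := by
  by_cases hi : i ∈ p.support
  · rw [hp, Finset.le_fold_max]; exact Or.inr ⟨i, hi, le_rfl⟩
  · rw [Polynomial.notMem_support_iff.mp hi, H.h_zero]; exact H.hp_nonneg p

lemma hp_le (p : R[X]) {C : ℝ} (h0 : 0 ≤ C) (hc : ∀ i, H.h (p.coeff i) ≤ C) :
    H.hp p ≤ C := by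
  rw [hp, Finset.fold_max_le]; exact ⟨h0, fun i _ => hc i⟩

lemma key (p q : R[X]) (k : ℕ) :
    H.h ((p * q).coeff k) ≤ H.hN p.natDegree + (H.hp p + H.hp q) := by
  set dp := p.natDegree with hdp
  set F : ℕ → R := fun j => if j ≤ k then p.coeff j * q.coeff (k - j) else 0 with hF
  have hcoeff : (p * q).coeff k = ∑ j : Fin (dp + 1), F (j : ℕ) := by
    rw [Polynomial.coeff_mul, Finset.Nat.sum_antidiagonal_eq_sum_range_succ_mk,
      Fin.sum_univ_eq_sum_range F (dp + 1)]
    simp only [hF]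
    have h1 : ∑ j ∈ Finset.range (dp + k + 2),
          (if j ≤ k then p.coeff j * q.coeff (k - j) else 0)
        = ∑ j ∈ Finset.range (k + 1), p.coeff j * q.coeff (k - j) := by
      rw [← Finset.sum_subset (Finset.range_subset_range.mpr (show k + 1 ≤ dp + k + 2 by omega))
        (fun j _ hj => if_neg fun h => hj (Finset.mem_range.mpr (by omega)))]
      exact Finset.sum_congr rfl fun j hj => by
        rw [if_pos (by simpa [Nat.lt_succ_iff] using Finset.mem_range.mp hj)]
    have h2 : ∑ j ∈ Finset.range (dp + 1),
          (if j ≤ k then p.coeff j * q.coeff (k - j) else 0)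
        = ∑ j ∈ Finset.range (dp + k + 2),
          (if j ≤ k then p.coeff j * q.coeff (k - j) else 0) := by
      apply Finset.sum_subset (Finset.range_subset_range.mpr (by omega))
      intro j hj hj'
      have hjdp : dp < j := by
        simp only [Finset.mem_range] at hj hj'; omega
      rw [Polynomial.coeff_eq_zero_of_natDegree_lt (by omega), zero_mul, ite_self]
    rw [h2, h1]
  rw [hcoeff]
  have := H.h_sum (dp + 1) (fun j => F (j : ℕ))
    (H.hp p + H.hp q) (add_nonneg (H.hp_nonneg p) (H.hp_nonneg q)) ?_
  · simpa [hN] using this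
  · intro i
    by_cases hi : (i : ℕ) ≤ k
    · simp only [hF, if_pos hi]
      exact le_trans (H.h_mul _ _) (add_le_add (H.h_coeff_le p i) (H.h_coeff_le q _))
    · simp only [hF, if_neg hi, H.h_zero]
      exact add_nonneg (H.hp_nonneg p) (H.hp_nonneg q)

end HeightFn

/-- `h(pq) ≤ h(min{deg p, deg q}) + h(p) + h(q)`. -/
theorem height_of_poly_mul {R : Type*} [CommRing R] [IsDomain R] (H : HeightFn R)
    (p q : R[X]) :
    H.hp (p * q) ≤ H.hN (min p.natDegree q.natDegree) + H.hp p + H.hp q := by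
  rw [add_assoc]
  rcases le_total p.natDegree q.natDegree with hle | hle
  · rw [min_eq_left hle]
    exact H.hp_le _ (add_nonneg (H.h_nonneg _) (add_nonneg (H.hp_nonneg p) (H.hp_nonneg q)))
      (fun k => H.key p q k)
  · rw [min_eq_right hle, mul_comm p q, add_comm (H.hp p) (H.hp q)]
    exact H.hp_le _ (add_nonneg (H.h_nonneg _) (add_nonneg (H.hp_nonneg q) (H.hp_nonneg p)))
      (fun k => H.key q p k)
end

section
/- With r_i, d_i ∈ ℕ (i = 1,…,n), r ≥ Σ_k r_k, and d ≥ ((r+1)Σ_k d_k − Σ_k r_k d_k)/(r+1 − Σ_k r_k), the inequality (r+1)(d+1) − (r+1)Σ_k d_k − (d+1)Σ_k r_k + Σ_k r_k d_k > 0 holds; equivalently, n(r+1)(d+1) − (r+1)Σ_k d_k − (d+1)Σ_k r_k + Σ_k r_k d_k > (n−1)(r+1)(d+1). -/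
/-- the counting inequality underlying the order-degree curve for
common left multiples.  If `Σ r_k ≤ r` and
`d ≥ ((r+1)Σd_k − Σr_k d_k)/(r+1−Σr_k)`, then
`(r+1)(d+1) − (r+1)Σd_k − (d+1)Σr_k + Σr_k d_k > 0`; equivalently, the number of
variables `n(r+1)(d+1) − (r+1)Σd_k − (d+1)Σr_k + Σr_k d_k` exceeds the number of
equations `(n−1)(r+1)(d+1)`. -/
theorem order_degree_counting (n : ℕ) (rk dk : Fin n → ℕ) (r : ℕ)
    (hr : ∑ k, rk k ≤ r) (d : ℝ)
    (hd : (((r : ℝ) + 1) * (∑ k, (dk k : ℝ)) - ∑ k, (rk k : ℝ) * (dk k : ℝ)) /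
            ((r : ℝ) + 1 - ∑ k, (rk k : ℝ)) ≤ d) :
    0 < ((r : ℝ) + 1) * (d + 1) - ((r : ℝ) + 1) * (∑ k, (dk k : ℝ)) -
          (d + 1) * (∑ k, (rk k : ℝ)) + ∑ k, (rk k : ℝ) * (dk k : ℝ) ∧
    ((n : ℝ) - 1) * (((r : ℝ) + 1) * (d + 1)) <
      (n : ℝ) * (((r : ℝ) + 1) * (d + 1)) - ((r : ℝ) + 1) * (∑ k, (dk k : ℝ)) -
        (d + 1) * (∑ k, (rk k : ℝ)) + ∑ k, (rk k : ℝ) * (dk k : ℝ) := by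
  set R := ∑ k, (rk k : ℝ)
  set D := ∑ k, (dk k : ℝ)
  set P := ∑ k, (rk k : ℝ) * (dk k : ℝ)
  have hR : R ≤ (r : ℝ) := by
    have : ((∑ k, rk k : ℕ) : ℝ) ≤ (r : ℝ) := Nat.cast_le.mpr hr
    simpa [R, Nat.cast_sum] using this
  have hc : 0 < (r : ℝ) + 1 - R := by linarith
  have hkey : ((r : ℝ) + 1) * D - P ≤ d * ((r : ℝ) + 1 - R) := by
    have := (div_le_iff₀ hc).mp hd
    linarith
  have h1 : 0 < ((r : ℝ) + 1) * (d + 1) - ((r : ℝ) + 1) * D - (d + 1) * R + P := by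
    nlinarith
  exact ⟨h1, by nlinarith⟩
end

section
/- Let L₁,…,Lₙ ∈ R[x][∂] with r_i = ord(L_i), p_i = lc(L_i), and let 𝔞 ⊆ 𝐑 = R[x][y_{i,j}] be the ideal generated by ∂^j L_i · y_{i,0} for all i = 1..n and j ≥ 0. For every m ∈ ℕ and every homogeneous P ∈ 𝐑 with y-multi-degree (D_1,…,D_n) and involving only variables y_{i,j} with j < r_i + m, there exists a homogeneous V ∈ 𝐑 with (Π_i (p_i^{D_i})^{[m]})·P ≡ V mod 𝔞, such that V involves only y_{i,j} with j < r_i, has y-multi-degree ≤ (D_1,…,D_n), and deg_x(V) ≤ deg_x(P) + m·Σ_i D_i·deg(L_i). -/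
/-- An Ore algebra `A = R[x][∂]` over `R[x]`, presented axiomatically: a ring `A`
containing `R[x]` via `ι`, with a distinguished element `pd` (the Ore variable `∂`)
satisfying the commutation rule `∂·p = σ(p)·∂ + δ(p)`, where `σ` is a ring
endomorphism of `R[x]` and `δ` a `σ`-derivation, both not increasing the degree
in `x`.  Every element of `A` is uniquely of the form `Σ ℓ_i ∂^i` (field `coeffs`). -/
structure OreAlg (R : Type*) [CommRing R] (A : Type*) [Ring A] where
  σ : Polynomial R →+* Polynomial R
  δ : Polynomial R →+ Polynomial R
  leibniz : ∀ p q : Polynomial R, δ (p * q) = σ p * δ q + δ p * q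
  σdeg : ∀ p : Polynomial R, (σ p).degree ≤ p.degree
  δdeg : ∀ p : Polynomial R, (δ p).degree ≤ p.degree
  ι : Polynomial R →+* A
  pd : A
  comm : ∀ p : Polynomial R, pd * ι p = ι (σ p) * pd + ι (δ p)
  coeffs : A ≃+ (ℕ →₀ Polynomial R)
  coeffs_symm_apply : ∀ c : ℕ →₀ Polynomial R,
    coeffs.symm c = c.sum fun i p => ι p * pd ^ i

namespace OreAlg

variable {R A : Type*} [CommRing R] [Ring A] (O : OreAlg R A)

/-- The order of an operator: the largest `i` with `ℓ_i ≠ 0`. -/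
noncomputable def ord (L : A) : ℕ := (O.coeffs L).support.sup id

/-- The degree of an operator: the largest `x`-degree among its coefficients. -/
noncomputable def deg (L : A) : ℕ := (O.coeffs L).support.sup fun i => ((O.coeffs L) i).natDegree

/-- The leading coefficient of an operator. -/
noncomputable def lc (L : A) : Polynomial R := (O.coeffs L) (O.ord L)

end OreAlg

open Polynomial

open Polynomial

namespace DFinite

variable {R : Type*} [CommRing R] {n : ℕ}

/-- The ring `𝐑 = R[x][y_{i,j} : i = 1..n, j ≥ 0]`. -/
abbrev MvR (R : Type*) [CommRing R] (n : ℕ) := MvPolynomial (Fin n × ℕ) (Polynomial R)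

/-- The `x`-degree of an element of `𝐑`. -/
noncomputable def degx (P : MvR R n) : ℕ := P.support.sup fun m => (MvPolynomial.coeff m P).natDegree

/-- The height (with respect to a height function on `R`) of an element of `𝐑`:
the maximum height of all elements of `R` appearing as coefficients. -/
noncomputable def mvHeight (H : HeightFn R) (P : MvR R n) : ℝ :=
  P.support.fold max 0 fun m => H.hp (MvPolynomial.coeff m P)

/-- The total degree of a monomial in the `i`-th group `y_{i,0}, y_{i,1}, …` of
variables. -/
def gdeg (i : Fin n) (m : (Fin n × ℕ) →₀ ℕ) : ℕ := m.sum fun v e => if v.1 = i then e else 0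

/-- `P` is homogeneous of multi-degree `Dv`, i.e. homogeneous of degree `Dv i` with
respect to each group `y_{i,0}, y_{i,1}, …` of variables. -/
def GHomog (P : MvR R n) (Dv : Fin n → ℕ) : Prop :=
  ∀ m ∈ P.support, ∀ i, gdeg i m = Dv i

end DFinite

namespace DFinite

variable {R A : Type*} [CommRing R] [Ring A] {n : ℕ}

/-- Action of an operator `L = Σ ℓ_i ∂^i ∈ R[x][∂]` on `𝐑`, via a given action
`Dact` of `∂` on `𝐑`. -/
noncomputable def actMv (O : OreAlg R A) (Dact : MvR R n →+ MvR R n) (L : A) (P : MvR R n) :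
    MvR R n :=
  (O.coeffs L).sum fun i p => MvPolynomial.C p * (⇑Dact)^[i] P

/-- The ideal `𝔞 ⊆ 𝐑` generated by `∂^j L_i · y_{i,0}` for all `i = 1..n`, `j ≥ 0`. -/
noncomputable def annIdeal (O : OreAlg R A) (Dact : MvR R n →+ MvR R n) (L : Fin n → A) :
    Ideal (MvR R n) :=
  Ideal.span {Q | ∃ (i : Fin n) (j : ℕ),
    Q = (⇑Dact)^[j] (actMv O Dact (L i) (MvPolynomial.X (i, 0)))}

/-- `p^{[m]} := p·σ(p)···σ^{m−1}(p)`. -/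
noncomputable def rising (σ : Polynomial R →+* Polynomial R) (p : Polynomial R) (m : ℕ) :
    Polynomial R :=
  ∏ k ∈ Finset.range m, (⇑σ)^[k] p

end DFinite

/-!
The generator `∂^m L_i · y_{i,0}` of `𝔞` equals `σ^m(p_i) y_{i,r_i+m}` plus a linear form in
the `y_{i,k}`, `k < r_i + m`, whose coefficients have degree at most `deg L_i`. For `P` homogeneous
of multi-degree `D`, the product `Π_i σ^m(p_i)^{D_i} · P` is the image of `P` under the
substitution `y_{i,j} ↦ σ^m(p_i) y_{i,j}`; replacing the image of each top variable
`y_{i,r_i+m}` by minus that linear form changes the result only modulo `𝔞`, keeps it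
homogeneous of multi-degree `D`, removes the top variables and raises `deg_x` by at most
`Σ_i D_i deg L_i`. Peeling off the `m` top layers one at a time accumulates the factor
`Π_i (p_i^{D_i})^{[m]}`.
-/

namespace MvPolynomial

theorem IsWeightedHomogeneous.bind₁ {σ τ R M : Type*} [CommSemiring R] [AddCommMonoid M]
    {w : σ → M} {w' : τ → M} {φ : MvPolynomial σ R} {m : M}
    (hφ : IsWeightedHomogeneous w φ m) (f : σ → MvPolynomial τ R)
    (hf : ∀ v, IsWeightedHomogeneous w' (f v) (w v)) :
    IsWeightedHomogeneous w' (bind₁ f φ) m := by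
  induction hφ using IsWeightedHomogeneous.induction_on with
  | zero => simpa using isWeightedHomogeneous_zero R w' m
  | add p q _ _ hp hq => simpa using hp.add hq
  | monomial d r hr =>
    rw [bind₁_monomial, ← hr, Finsupp.weight_apply, Finsupp.sum]
    exact (IsWeightedHomogeneous.prod _ _ _ fun v _ => (hf v).pow (d v)).C_mul r

theorem bind₁_sub_bind₁_mem {σ τ S : Type*} [CommRing S] {I : Ideal (MvPolynomial τ S)}
    {f g : σ → MvPolynomial τ S} {p : MvPolynomial σ S}
    (h : ∀ v ∈ p.vars, f v - g v ∈ I) :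
    bind₁ f p - bind₁ g p ∈ I := by
  rw [← Ideal.Quotient.eq]
  refine hom_congr_vars (f₁ := (Ideal.Quotient.mk I).comp (bind₁ f).toRingHom)
    (f₂ := (Ideal.Quotient.mk I).comp (bind₁ g).toRingHom) ?_ (fun v hv _ => ?_) rfl
  · ext; simp
  · simpa using Ideal.Quotient.eq.mpr (h v hv)

theorem forall_mem_vars_iff {σ S : Type*} [CommSemiring S] {p : MvPolynomial σ S}
    {q : σ → Prop} :
    (∀ v ∈ p.vars, q v) ↔ ∀ μ ∈ p.support, ∀ v ∈ μ.support, q v := by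
  simp only [mem_vars_iff_mem_support]
  exact ⟨fun h μ hμ v hv => h v ⟨μ, hμ, hv⟩, fun h v ⟨μ, hμ, hv⟩ => h μ hμ v hv⟩

end MvPolynomial

namespace DFinite

open MvPolynomial (bind₁ bind₁_monomial IsWeightedHomogeneous)

section Degx

variable {R : Type*} [CommRing R] {n : ℕ}

lemma natDegree_coeff_le_degx (P : MvR R n) (μ : (Fin n × ℕ) →₀ ℕ) :
    (MvPolynomial.coeff μ P).natDegree ≤ degx P := by
  by_cases h : μ ∈ P.support
  · exact Finset.le_sup (f := fun μ => (MvPolynomial.coeff μ P).natDegree) h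
  · simp [MvPolynomial.notMem_support_iff.mp h]

lemma degx_le {P : MvR R n} {d : ℕ} (h : ∀ μ, (MvPolynomial.coeff μ P).natDegree ≤ d) :
    degx P ≤ d :=
  Finset.sup_le fun μ _ => h μ

@[simp] lemma degx_zero : degx (0 : MvR R n) = 0 := by simp [degx]

lemma degx_add_le (P Q : MvR R n) : degx (P + Q) ≤ max (degx P) (degx Q) :=
  degx_le fun μ => by
    rw [MvPolynomial.coeff_add]
    exact (natDegree_add_le _ _).trans
      (max_le_max (natDegree_coeff_le_degx _ _) (natDegree_coeff_le_degx _ _))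

@[simp] lemma degx_neg (P : MvR R n) : degx (-P) = degx P := by
  unfold degx
  rw [MvPolynomial.support_neg]
  simp only [MvPolynomial.coeff_neg, natDegree_neg]

lemma degx_sum_le {ι : Type*} {s : Finset ι} {f : ι → MvR R n} {d : ℕ}
    (h : ∀ k ∈ s, degx (f k) ≤ d) : degx (∑ k ∈ s, f k) ≤ d := by
  classical
  induction s using Finset.induction with
  | empty => simp
  | insert k s hk ih =>
    rw [Finset.sum_insert hk]
    exact (degx_add_le _ _).trans (max_le (h k (Finset.mem_insert_self k s))
      (ih fun k hks => h k (Finset.mem_insert_of_mem hks)))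

lemma degx_mul_le (P Q : MvR R n) : degx (P * Q) ≤ degx P + degx Q := by
  classical
  refine degx_le fun μ => ?_
  rw [MvPolynomial.coeff_mul]
  exact natDegree_sum_le_of_forall_le _ _ fun x _ => natDegree_mul_le.trans
    (add_le_add (natDegree_coeff_le_degx _ _) (natDegree_coeff_le_degx _ _))

lemma degx_C_mul_le (p : Polynomial R) (P : MvR R n) :
    degx (MvPolynomial.C p * P) ≤ p.natDegree + degx P :=
  degx_le fun μ => by
    rw [MvPolynomial.coeff_C_mul]
    exact natDegree_mul_le.trans (add_le_add_right (natDegree_coeff_le_degx _ _) _)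

lemma degx_C_mul_X_le (p : Polynomial R) (v : Fin n × ℕ) :
    degx (MvPolynomial.C p * MvPolynomial.X v) ≤ p.natDegree :=
  degx_le fun μ => by
    rw [MvPolynomial.C_mul_X_eq_monomial, MvPolynomial.coeff_monomial]
    split <;> simp

@[simp] lemma degx_one : degx (1 : MvR R n) = 0 :=
  Nat.le_zero.mp <| degx_le fun μ => by
    rw [MvPolynomial.coeff_one]
    split <;> simp

lemma degx_prod_le {ι : Type*} (s : Finset ι) (f : ι → MvR R n) :
    degx (∏ k ∈ s, f k) ≤ ∑ k ∈ s, degx (f k) := by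
  classical
  induction s using Finset.induction with
  | empty => simp
  | insert k s hk ih =>
    rw [Finset.prod_insert hk, Finset.sum_insert hk]
    exact (degx_mul_le _ _).trans (add_le_add le_rfl ih)

lemma degx_pow_le (P : MvR R n) (k : ℕ) : degx (P ^ k) ≤ k * degx P := by
  simpa using degx_prod_le (Finset.range k) fun _ => P

lemma degx_bind₁_le (f : Fin n × ℕ → MvR R n) (e : Fin n × ℕ → ℕ)
    (hf : ∀ v, degx (f v) ≤ e v)
    {P : MvR R n} {d : ℕ} (hP : ∀ μ ∈ P.support, Finsupp.weight e μ ≤ d) :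
    degx (bind₁ f P) ≤ degx P + d := by
  conv_lhs => rw [P.as_sum, map_sum]
  refine degx_sum_le fun μ hμ => ?_
  rw [bind₁_monomial]
  refine (degx_C_mul_le _ _).trans (add_le_add (natDegree_coeff_le_degx P μ) ?_)
  calc degx (∏ v ∈ μ.support, f v ^ μ v)
      ≤ ∑ v ∈ μ.support, μ v * e v :=
        (degx_prod_le _ _).trans (Finset.sum_le_sum fun v _ =>
          (degx_pow_le _ _).trans (Nat.mul_le_mul_left _ (hf v)))
    _ = Finsupp.weight e μ := by simp [Finsupp.weight_apply, Finsupp.sum]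
    _ ≤ d := hP μ hμ

end Degx

section GroupWeight

variable {n : ℕ}

def groupWeight (v : Fin n × ℕ) : Fin n → ℕ := Pi.single v.1 1

lemma gdeg_eq_weight (i : Fin n) (μ : (Fin n × ℕ) →₀ ℕ) :
    gdeg i μ = Finsupp.weight groupWeight μ i := by
  simp [gdeg, Finsupp.weight_apply, Finsupp.sum, groupWeight, Pi.single_apply, eq_comm]

lemma gHomog_iff_isWeightedHomogeneous {R : Type*} [CommRing R] {P : MvR R n}
    {D : Fin n → ℕ} : GHomog P D ↔ IsWeightedHomogeneous groupWeight P D := by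
  simp only [GHomog, IsWeightedHomogeneous, MvPolynomial.mem_support_iff, _root_.funext_iff,
    gdeg_eq_weight]

lemma sum_gdeg_mul (μ : (Fin n × ℕ) →₀ ℕ) (e : Fin n → ℕ) :
    ∑ i, gdeg i μ * e i = Finsupp.weight (fun v => e v.1) μ := by
  simp only [gdeg, Finsupp.weight_apply, Finsupp.sum, Finset.sum_mul, smul_eq_mul]
  rw [Finset.sum_comm]
  simp [ite_mul]

lemma prod_pow_gdeg {M : Type*} [CommMonoid M] (c : Fin n → M) (μ : (Fin n × ℕ) →₀ ℕ) :
    ∏ i, c i ^ gdeg i μ = μ.prod fun v k => c v.1 ^ k := by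
  simp only [gdeg, Finsupp.sum, Finsupp.prod, ← Finset.prod_pow_eq_pow_sum]
  rw [Finset.prod_comm]
  simp [pow_ite]

lemma bind₁_C_mul_X_of_gHomog {R : Type*} [CommRing R] (c : Fin n → Polynomial R)
    {P : MvR R n} {D : Fin n → ℕ} (hP : GHomog P D) :
    bind₁ (fun v => MvPolynomial.C (c v.1) * MvPolynomial.X v) P =
      MvPolynomial.C (∏ i, c i ^ D i) * P := by
  conv_lhs => rw [P.as_sum, map_sum]
  conv_rhs => rw [P.as_sum, Finset.mul_sum]
  refine Finset.sum_congr rfl fun μ hμ => ?_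
  have hD : ∏ i, c i ^ D i = ∏ i, c i ^ gdeg i μ :=
    Finset.prod_congr rfl fun i _ => by rw [hP μ hμ i]
  rw [bind₁_monomial, MvPolynomial.monomial_eq, hD, prod_pow_gdeg]
  simp only [mul_pow, Finset.prod_mul_distrib, Finsupp.prod, map_prod, map_pow]
  ring

end GroupWeight

section LinearForms

variable {R : Type*} [CommRing R] {n : ℕ}

noncomputable def boundedLinearForms (i : Fin n) (t d : ℕ) : AddSubgroup (MvR R n) :=
  AddSubgroup.closure {Q | ∃ k < t, ∃ g : Polynomial R, g.natDegree ≤ d ∧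
    Q = MvPolynomial.C g * MvPolynomial.X (i, k)}

variable {i : Fin n} {t d : ℕ} {Q : MvR R n}

lemma C_mul_X_mem_boundedLinearForms {k : ℕ} {g : Polynomial R} (hk : k < t)
    (hg : g.natDegree ≤ d) :
    MvPolynomial.C g * MvPolynomial.X (i, k) ∈ boundedLinearForms (R := R) i t d :=
  AddSubgroup.subset_closure ⟨k, hk, g, hg, rfl⟩

lemma isWeightedHomogeneous_of_mem_boundedLinearForms (hQ : Q ∈ boundedLinearForms i t d) :
    IsWeightedHomogeneous groupWeight Q (Pi.single i 1) := by
  refine (AddSubgroup.closure_le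
    (MvPolynomial.weightedHomogeneousSubmodule _ groupWeight _).toAddSubgroup).mpr ?_ hQ
  rintro _ ⟨k, -, g, -, rfl⟩
  exact (MvPolynomial.isWeightedHomogeneous_X _ groupWeight (i, k)).C_mul g

lemma degx_le_of_mem_boundedLinearForms (hQ : Q ∈ boundedLinearForms i t d) : degx Q ≤ d := by
  induction hQ using AddSubgroup.closure_induction with
  | mem _ hx =>
    obtain ⟨k, -, g, hg, rfl⟩ := hx
    exact (degx_C_mul_X_le g _).trans hg
  | zero => simp
  | add _ _ _ _ hP hQ => exact (degx_add_le _ _).trans (max_le hP hQ)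
  | neg _ _ hP => rwa [degx_neg]

lemma mem_vars_of_mem_boundedLinearForms (hQ : Q ∈ boundedLinearForms i t d) :
    ∀ u ∈ Q.vars, u.1 = i ∧ u.2 < t := by
  classical
  induction hQ using AddSubgroup.closure_induction with
  | mem _ hx =>
    obtain ⟨k, hk, g, -, rfl⟩ := hx
    intro u hu
    obtain ⟨μ, hμ, hu⟩ := (MvPolynomial.mem_vars_iff_mem_support u).mp hu
    rw [MvPolynomial.C_mul_X_eq_monomial] at hμ
    rw [Finset.mem_singleton.mp (MvPolynomial.support_monomial_subset hμ)] at hu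
    rw [Finset.mem_singleton.mp (Finsupp.support_single_subset hu)]
    exact ⟨rfl, hk⟩
  | zero => simp
  | add _ _ _ _ hP hQ =>
    intro u hu
    exact (Finset.mem_union.mp (MvPolynomial.vars_add_subset _ _ hu)).elim (hP u) (hQ u)
  | neg _ _ hP => rwa [MvPolynomial.vars_neg]

end LinearForms

section OreAlg

variable {R A : Type*} [CommRing R] [Ring A] (O : OreAlg R A)

lemma natDegree_iterate_σ_le (p : Polynomial R) (j : ℕ) :
    ((⇑O.σ)^[j] p).natDegree ≤ p.natDegree := by
  induction j with
  | zero => exact le_rfl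
  | succ j ih =>
    rw [Function.iterate_succ_apply']
    exact (natDegree_le_natDegree (O.σdeg _)).trans ih

lemma natDegree_coeffs_le_deg (L : A) (k : ℕ) : (O.coeffs L k).natDegree ≤ O.deg L := by
  by_cases h : k ∈ (O.coeffs L).support
  · exact Finset.le_sup (f := fun k => (O.coeffs L k).natDegree) h
  · simp [Finsupp.notMem_support_iff.mp h]

lemma le_ord_of_mem_support {L : A} {k : ℕ} (h : k ∈ (O.coeffs L).support) : k ≤ O.ord L :=
  Finset.le_sup (f := id) h

lemma rising_pow_succ (p : Polynomial R) (D m : ℕ) :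
    rising O.σ (p ^ D) (m + 1) = rising O.σ (p ^ D) m * ((⇑O.σ)^[m] p) ^ D := by
  rw [rising, Finset.prod_range_succ, iterate_map_pow]
  rfl

end OreAlg

section Action

variable {R A : Type*} [CommRing R] [Ring A] {n : ℕ} (O : OreAlg R A)
  (Dact : MvR R n →+ MvR R n)
  (hXrule : ∀ (i : Fin n) (j : ℕ),
    Dact (MvPolynomial.X (i, j)) = MvPolynomial.X (i, j + 1))
  (hCrule : ∀ (p : Polynomial R) (P : MvR R n),
    Dact (MvPolynomial.C p * P) =
      MvPolynomial.C (O.σ p) * Dact P + MvPolynomial.C (O.δ p) * P)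

include hXrule in
lemma iterate_Dact_X (i : Fin n) (j k : ℕ) :
    (⇑Dact)^[k] (MvPolynomial.X (i, j)) = MvPolynomial.X (i, j + k) := by
  induction k with
  | zero => rfl
  | succ k ih => rw [Function.iterate_succ_apply', ih, hXrule, add_assoc]

include hXrule hCrule in
lemma Dact_mem_boundedLinearForms {i : Fin n} {t d : ℕ} {Y : MvR R n}
    (hY : Y ∈ boundedLinearForms i t d) : Dact Y ∈ boundedLinearForms i (t + 1) d := by
  refine (AddSubgroup.closure_le ((boundedLinearForms i (t + 1) d).comap Dact)).mpr ?_ hY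
  rintro _ ⟨k, hk, g, hg, rfl⟩
  rw [SetLike.mem_coe, AddSubgroup.mem_comap, hCrule, hXrule]
  exact add_mem
    (C_mul_X_mem_boundedLinearForms (by omega) ((natDegree_le_natDegree (O.σdeg g)).trans hg))
    (C_mul_X_mem_boundedLinearForms (by omega) ((natDegree_le_natDegree (O.δdeg g)).trans hg))

include hXrule hCrule in
lemma exists_iterate_actMv_X_eq (L : A) (i : Fin n) (j : ℕ) :
    ∃ Y ∈ boundedLinearForms i (O.ord L + j) (O.deg L),
      (⇑Dact)^[j] (actMv O Dact L (MvPolynomial.X (i, 0))) =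
        MvPolynomial.C ((⇑O.σ)^[j] (O.lc L)) * MvPolynomial.X (i, O.ord L + j) + Y := by
  induction j with
  | zero =>
    refine ⟨∑ k ∈ Finset.range (O.ord L),
        MvPolynomial.C (O.coeffs L k) * MvPolynomial.X (i, k),
      sum_mem fun k hk => C_mul_X_mem_boundedLinearForms (Finset.mem_range.mp hk)
        (natDegree_coeffs_le_deg O L k), ?_⟩
    rw [Function.iterate_zero_apply, actMv, Finsupp.sum,
      Finset.sum_subset (s₂ := Finset.range (O.ord L + 1))
        (fun k hk => Finset.mem_range_succ_iff.mpr (le_ord_of_mem_support O hk))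
        (fun k _ hk => by simp [Finsupp.notMem_support_iff.mp hk]),
      Finset.sum_range_succ, add_comm]
    simp [iterate_Dact_X Dact hXrule, OreAlg.lc]
  | succ j ih =>
    obtain ⟨Y, hY, hEq⟩ := ih
    refine ⟨MvPolynomial.C (O.δ ((⇑O.σ)^[j] (O.lc L))) * MvPolynomial.X (i, O.ord L + j)
        + Dact Y,
      add_mem (C_mul_X_mem_boundedLinearForms (by omega) ?_)
        (Dact_mem_boundedLinearForms O Dact hXrule hCrule hY), ?_⟩
    · exact (natDegree_le_natDegree (O.δdeg _)).trans
        ((natDegree_iterate_σ_le O _ j).trans (natDegree_coeffs_le_deg O L _))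
    · rw [Function.iterate_succ_apply', hEq, map_add, hCrule, hXrule,
        Function.iterate_succ_apply', ← add_assoc (O.ord L) j 1]
      exact add_assoc _ _ _

end Action

section NormalForm

variable {R A : Type*} [CommRing R] [Ring A] {n : ℕ} (O : OreAlg R A)
  (Dact : MvR R n →+ MvR R n) (L : Fin n → A)
  (hXrule : ∀ (i : Fin n) (j : ℕ),
    Dact (MvPolynomial.X (i, j)) = MvPolynomial.X (i, j + 1))
  (hCrule : ∀ (p : Polynomial R) (P : MvR R n),
    Dact (MvPolynomial.C p * P) =
      MvPolynomial.C (O.σ p) * Dact P + MvPolynomial.C (O.δ p) * P)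

include hXrule hCrule in
lemma exists_reduce_top_layer (m : ℕ) {P : MvR R n} {D : Fin n → ℕ} (hP : GHomog P D)
    (hvars : ∀ v ∈ P.vars, v.2 < O.ord (L v.1) + m + 1) :
    ∃ Q : MvR R n, GHomog Q D ∧ (∀ v ∈ Q.vars, v.2 < O.ord (L v.1) + m) ∧
      degx Q ≤ degx P + ∑ i, D i * O.deg (L i) ∧
      MvPolynomial.C (∏ i, ((⇑O.σ)^[m] (O.lc (L i))) ^ D i) * P - Q ∈ annIdeal O Dact L := by
  classical
  choose Y hY hYeq using fun i => exists_iterate_actMv_X_eq O Dact hXrule hCrule (L i) i m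
  set c : Fin n → Polynomial R := fun i => (⇑O.σ)^[m] (O.lc (L i))
  -- Variables `y_{i,j}` with `j > r_i + m` do not occur in `P`, so their image is irrelevant.
  set f : Fin n × ℕ → MvR R n := fun v => if v.2 < O.ord (L v.1) + m
    then MvPolynomial.C (c v.1) * MvPolynomial.X v else -Y v.1
  have hf (v : Fin n × ℕ) :
      f v ∈ boundedLinearForms v.1 (O.ord (L v.1) + m) (O.deg (L v.1)) := by
    simp only [f]
    split_ifs with h
    · exact C_mul_X_mem_boundedLinearForms h
        ((natDegree_iterate_σ_le O _ m).trans (natDegree_coeffs_le_deg O _ _))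
    · exact neg_mem (hY v.1)
  refine ⟨bind₁ f P, ?_, fun u hu => ?_, ?_, ?_⟩
  · rw [gHomog_iff_isWeightedHomogeneous] at hP ⊢
    exact hP.bind₁ f fun v => isWeightedHomogeneous_of_mem_boundedLinearForms (hf v)
  · obtain ⟨v, -, hv⟩ := Finset.mem_biUnion.mp (MvPolynomial.vars_bind₁ f P hu)
    obtain ⟨hi, hlt⟩ := mem_vars_of_mem_boundedLinearForms (hf v) u hv
    rwa [hi]
  · refine degx_bind₁_le f (fun v => O.deg (L v.1))
      (fun v => degx_le_of_mem_boundedLinearForms (hf v)) fun μ hμ => ?_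
    rw [← sum_gdeg_mul μ fun i => O.deg (L i)]
    simp [hP μ hμ]
  · rw [← bind₁_C_mul_X_of_gHomog c hP]
    refine MvPolynomial.bind₁_sub_bind₁_mem fun v hv => ?_
    obtain ⟨i, j⟩ := v
    simp only [f]
    split_ifs with h
    · simp
    · have hj : j < O.ord (L i) + m + 1 := hvars _ hv
      obtain rfl : j = O.ord (L i) + m := by omega
      rw [sub_neg_eq_add, ← hYeq i]
      exact Ideal.subset_span ⟨i, m, rfl⟩

include hXrule hCrule in
lemma exists_normalForm (m : ℕ) {P : MvR R n} {D : Fin n → ℕ} (hP : GHomog P D)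
    (hvars : ∀ v ∈ P.vars, v.2 < O.ord (L v.1) + m) :
    ∃ V : MvR R n, GHomog V D ∧ (∀ v ∈ V.vars, v.2 < O.ord (L v.1)) ∧
      degx V ≤ degx P + m * ∑ i, D i * O.deg (L i) ∧
      MvPolynomial.C (∏ i, rising O.σ (O.lc (L i) ^ D i) m) * P - V ∈ annIdeal O Dact L := by
  induction m generalizing P with
  | zero => exact ⟨P, hP, hvars, by simp, by simp [rising]⟩
  | succ m ih =>
    obtain ⟨Q, hQ, hQvars, hQdeg, hQmem⟩ :=
      exists_reduce_top_layer O Dact L hXrule hCrule m hP hvars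
    obtain ⟨V, hV, hVvars, hVdeg, hVmem⟩ := ih hQ hQvars
    refine ⟨V, hV, hVvars, by rw [add_one_mul]; linarith, ?_⟩
    have hsplit : MvPolynomial.C (∏ i, rising O.σ (O.lc (L i) ^ D i) (m + 1)) * P - V =
        MvPolynomial.C (∏ i, rising O.σ (O.lc (L i) ^ D i) m) *
          (MvPolynomial.C (∏ i, ((⇑O.σ)^[m] (O.lc (L i))) ^ D i) * P - Q) +
        (MvPolynomial.C (∏ i, rising O.σ (O.lc (L i) ^ D i) m) * Q - V) := by
      simp only [rising_pow_succ, Finset.prod_mul_distrib, map_mul]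
      ring
    rw [hsplit]
    exact add_mem (Ideal.mul_mem_left _ _ hQmem) hVmem

end NormalForm

end DFinite

open DFinite in
theorem normal_form_bound_general {R A : Type*} [CommRing R] [Ring A]
    (O : OreAlg R A) {n : ℕ} (L : Fin n → A)
    (Dact : MvR R n →+ MvR R n)
    (hXrule : ∀ (i : Fin n) (j : ℕ),
      Dact (MvPolynomial.X (i, j)) = MvPolynomial.X (i, j + 1))
    (hCrule : ∀ (p : Polynomial R) (P : MvR R n),
      Dact (MvPolynomial.C p * P) =
        MvPolynomial.C (O.σ p) * Dact P + MvPolynomial.C (O.δ p) * P)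
    (m : ℕ) (P : MvR R n) (Dv : Fin n → ℕ) (hPhom : GHomog P Dv)
    (hPord : ∀ mon ∈ P.support, ∀ v ∈ mon.support, v.2 < O.ord (L v.1) + m) :
    ∃ (V : MvR R n) (Ev : Fin n → ℕ),
      GHomog V Ev ∧ (∀ i, Ev i ≤ Dv i) ∧
      (∀ mon ∈ V.support, ∀ v ∈ mon.support, v.2 < O.ord (L v.1)) ∧
      degx V ≤ degx P + m * ∑ i, Dv i * O.deg (L i) ∧
      MvPolynomial.C (∏ i, rising O.σ (O.lc (L i) ^ Dv i) m) * P - V ∈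
        annIdeal O Dact L := by
  obtain ⟨V, hV, hVvars, hVdeg, hVmem⟩ := exists_normalForm O Dact L hXrule hCrule m hPhom
    (MvPolynomial.forall_mem_vars_iff.mpr hPord)
  exact ⟨V, Dv, hV, fun _ => le_rfl, MvPolynomial.forall_mem_vars_iff.mp hVvars, hVdeg, hVmem⟩

open DFinite in
/-- normal form lemma: every homogeneous `P` involving only
`y_{i,j}` with `j < r_i + m` is, after multiplication by `Π_i (p_i^{D_i})^{[m]}`,
congruent mod `𝔞` to a homogeneous `V` involving only `y_{i,j}` with `j < r_i`,
of multi-degree at most `(D_1,…,D_n)` and `x`-degree at most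
`deg_x(P) + m·Σ_i D_i·deg(L_i)`. -/
theorem normal_form_bound {R A : Type*} [CommRing R] [IsDomain R] [Ring A]
    (O : OreAlg R A) {n : ℕ} (L : Fin n → A) (hL : ∀ i, L i ≠ 0)
    (α β γ : ℤ)
    (hα : α = 0 ∨ α = 1 ∨ α = -1) (hβ : β = 0 ∨ β = 1 ∨ β = -1)
    (hγ : γ = 0 ∨ γ = 1 ∨ γ = -1)
    (Dact : MvR R n →+ MvR R n)
    (hXrule : ∀ (i : Fin n) (j : ℕ),
      Dact (MvPolynomial.X (i, j)) = MvPolynomial.X (i, j + 1))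
    (hCrule : ∀ (p : Polynomial R) (P : MvR R n),
      Dact (MvPolynomial.C p * P) =
        MvPolynomial.C (O.σ p) * Dact P + MvPolynomial.C (O.δ p) * P)
    (hmul : ∀ P Q : MvR R n,
      Dact (P * Q) = α • (Dact P * Dact Q) + β • (Dact P * Q + P * Dact Q) + γ • (P * Q))
    (m : ℕ) (P : MvR R n) (Dv : Fin n → ℕ) (hPhom : GHomog P Dv)
    (hPord : ∀ mon ∈ P.support, ∀ v ∈ mon.support, v.2 < O.ord (L v.1) + m) :
    ∃ (V : MvR R n) (Ev : Fin n → ℕ),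
      GHomog V Ev ∧ (∀ i, Ev i ≤ Dv i) ∧
      (∀ mon ∈ V.support, ∀ v ∈ mon.support, v.2 < O.ord (L v.1)) ∧
      degx V ≤ degx P + m * ∑ i, Dv i * O.deg (L i) ∧
      MvPolynomial.C (∏ i, rising O.σ (O.lc (L i) ^ Dv i) m) * P - V ∈
        annIdeal O Dact L :=
  normal_form_bound_general O L Dact hXrule hCrule m P Dv hPhom hPord
end
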